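/- For 0 < s < n there exist constants c₁, c₂ > 0 depending only on n and s such that c₁ ψ_1^s(x) ≤ min{1, |x|^{−s}} ≤ c₂ ψ_1^s(x) for all x ∈ ℝ^n, where ψ_1^s(x) = ∫_{ℝ^n} |y|^{−s} exp(−|x−y|²/2) dy. -/

import Mathlib

open MeasureTheory Metric Classical

/-- The kernel φ_1^s(x) = min{1, |x|^{-s}}, with value 1 at x = 0. -/
noncomputable def phiOne (n : ℕ) (s : ℝ) (x : EuclideanSpace ℝ (Fin n)) : ℝ :=
  if x = 0 then 1 else min 1 (‖x‖ ^ (-s))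

/-- The kernel ψ_1^s(x) = ∫ |y|^{-s} exp(-|x - y|²/2) dy. -/
noncomputable def psiOne (n : ℕ) (s : ℝ) (x : EuclideanSpace ℝ (Fin n)) : ℝ :=
  ∫ y : EuclideanSpace ℝ (Fin n), ‖y‖ ^ (-s) * Real.exp (-‖x - y‖ ^ 2 / 2)

/-!
Both kernels are compared with `(1 + ‖x‖) ^ (-s)`. From below, the Gaussian is at least `exp (-1/2)`
on the unit ball around `x`, where `‖y‖ ≤ 1 + ‖x‖`. From above, `ψ` is bounded since `‖y‖ ^ (-s)` is
integrable near `0` (as `s < n`) and at most `1` elsewhere; for `x ≠ 0`, the region `‖y‖ ≥ ‖x‖ / 2`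
contributes `O(‖x‖ ^ (-s))`, and on `‖y‖ < ‖x‖ / 2` the Gaussian factor is at most
`exp (-‖x‖² / 16) * exp (-‖x - y‖² / 4)`, so that region contributes `exp (-‖x‖² / 16)` times a
bounded convolution, again `O(‖x‖ ^ (-s))`.
-/

lemma Real.exp_neg_sq_div_le_mul_rpow_neg {a s t : ℝ} (ha : 0 < a) (hs : 0 ≤ s) (ht : 0 < t) :
    Real.exp (-t ^ 2 / a) ≤ (s * a / 2) ^ (s / 2) * t ^ (-s) := by
  have key := ProbabilityTheory.rpow_abs_le_mul_exp_abs (t ^ 2) (p := s / 2) (t := a⁻¹)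
    (by positivity) (inv_ne_zero ha.ne')
  have hts : |t ^ 2| ^ (s / 2) = t ^ s := by
    rw [abs_of_nonneg (by positivity), ← Real.rpow_natCast, ← Real.rpow_mul ht.le]
    ring_nf
  rw [hts, abs_of_pos (inv_pos.2 ha), abs_of_nonneg (by positivity), div_inv_eq_mul,
    div_mul_eq_mul_div, inv_mul_eq_div] at key
  rw [Real.rpow_neg ht.le, ← div_eq_mul_inv, le_div_iff₀ (by positivity), neg_div,
    Real.exp_neg, inv_mul_le_iff₀ (Real.exp_pos _), mul_comm (Real.exp _)]
  exact key

lemma Real.exp_neg_sq_div_le_one {a : ℝ} (ha : 0 ≤ a) (t : ℝ) : Real.exp (-t ^ 2 / a) ≤ 1 :=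
  Real.exp_le_one_iff.2 (div_nonpos_of_nonpos_of_nonneg (neg_nonpos.2 (sq_nonneg t)) ha)

lemma Real.div_two_rpow_neg {s t : ℝ} (ht : 0 ≤ t) : (t / 2) ^ (-s) = 2 ^ s * t ^ (-s) := by
  rw [Real.div_rpow ht zero_le_two, Real.rpow_neg zero_le_two, div_inv_eq_mul, mul_comm]

lemma norm_rpow_neg_mul_le_indicator_add {V : Type*} [NormedAddCommGroup V] {s c : ℝ}
    (hs : 0 ≤ s) (hc₀ : 0 ≤ c) (hc₁ : c ≤ 1) (y : V) :
    ‖y‖ ^ (-s) * c ≤ (ball 0 1).indicator (fun y : V => ‖y‖ ^ (-s)) y + c := by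
  by_cases hy : y ∈ ball (0 : V) 1
  · rw [Set.indicator_of_mem hy]
    nlinarith [Real.rpow_nonneg (norm_nonneg y) (-s)]
  · have h1y : 1 ≤ ‖y‖ := by simpa using hy
    rw [Set.indicator_of_notMem hy, zero_add]
    exact mul_le_of_le_one_left hc₀ (Real.rpow_le_one_of_one_le_of_nonpos h1y (by linarith))

lemma norm_rpow_neg_mul_exp_le {V : Type*} [NormedAddCommGroup V] {s : ℝ} (hs : 0 ≤ s)
    {x : V} (hx : x ≠ 0) (y : V) :
    ‖y‖ ^ (-s) * Real.exp (-‖x - y‖ ^ 2 / 2) ≤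
      Real.exp (-‖x‖ ^ 2 / 16) * (‖y‖ ^ (-s) * Real.exp (-‖x - y‖ ^ 2 / 4)) +
        (‖x‖ / 2) ^ (-s) * Real.exp (-‖x - y‖ ^ 2 / 2) := by
  have hy₀ : 0 ≤ ‖y‖ ^ (-s) := Real.rpow_nonneg (norm_nonneg y) _
  rcases lt_or_ge ‖y‖ (‖x‖ / 2) with hy | hy
  · have hxy : ‖x‖ / 2 ≤ ‖x - y‖ := by linarith [norm_sub_norm_le x y]
    have hexp : Real.exp (-‖x - y‖ ^ 2 / 2) ≤
        Real.exp (-‖x‖ ^ 2 / 16) * Real.exp (-‖x - y‖ ^ 2 / 4) := by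
      rw [← Real.exp_add, Real.exp_le_exp]
      nlinarith [norm_nonneg x]
    calc ‖y‖ ^ (-s) * Real.exp (-‖x - y‖ ^ 2 / 2)
        ≤ Real.exp (-‖x‖ ^ 2 / 16) * (‖y‖ ^ (-s) * Real.exp (-‖x - y‖ ^ 2 / 4)) := by
          rw [mul_left_comm]; gcongr
      _ ≤ _ := le_add_of_nonneg_right (by positivity)
  · have hx₀ : 0 < ‖x‖ / 2 := by positivity
    calc ‖y‖ ^ (-s) * Real.exp (-‖x - y‖ ^ 2 / 2)
        ≤ (‖x‖ / 2) ^ (-s) * Real.exp (-‖x - y‖ ^ 2 / 2) :=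
          mul_le_mul_of_nonneg_right (Real.rpow_le_rpow_of_nonpos hx₀ hy (neg_nonpos.2 hs))
            (Real.exp_pos _).le
      _ ≤ _ := le_add_of_nonneg_left (by positivity)

section NormRpowNeg

variable {V : Type*} [NormedAddCommGroup V] [NormedSpace ℝ V] [FiniteDimensional ℝ V]
  [MeasurableSpace V] [BorelSpace V] {μ : Measure V} [μ.IsAddHaarMeasure] {s : ℝ}

lemma integrableOn_norm_rpow_neg_ball (hs : 0 ≤ s) (hsd : s < Module.finrank ℝ V) (r : ℝ) :
    IntegrableOn (fun y : V => ‖y‖ ^ (-s)) (ball 0 r) μ :=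
  integrableOn_ball_of_norm_le_rpow (C := 1) (by exact_mod_cast hs.trans_lt hsd) hsd
    (ae_of_all _ fun y => by simp [abs_of_nonneg (Real.rpow_nonneg (norm_nonneg y) _)])
    (measurable_norm.pow_const _).aestronglyMeasurable

variable {g : V → ℝ}

lemma integrable_norm_rpow_neg_mul (hs : 0 ≤ s) (hsd : s < Module.finrank ℝ V)
    (hg : Integrable g μ) (hg₀ : ∀ y, 0 ≤ g y) (hg₁ : ∀ y, g y ≤ 1) :
    Integrable (fun y : V => ‖y‖ ^ (-s) * g y) μ := by
  refine Integrable.mono' (((integrableOn_norm_rpow_neg_ball hs hsd 1).integrable_indicator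
    measurableSet_ball).add hg) ((measurable_norm.pow_const _).aestronglyMeasurable.mul
    hg.aestronglyMeasurable) (ae_of_all _ fun y => ?_)
  rw [Real.norm_of_nonneg (mul_nonneg (Real.rpow_nonneg (norm_nonneg y) _) (hg₀ y))]
  exact norm_rpow_neg_mul_le_indicator_add hs (hg₀ y) (hg₁ y) y

lemma integral_norm_rpow_neg_mul_le (hs : 0 ≤ s) (hsd : s < Module.finrank ℝ V)
    (hg : Integrable g μ) (hg₀ : ∀ y, 0 ≤ g y) (hg₁ : ∀ y, g y ≤ 1) :
    ∫ y, ‖y‖ ^ (-s) * g y ∂μ ≤ (∫ y in ball (0 : V) 1, ‖y‖ ^ (-s) ∂μ) + ∫ y, g y ∂μ := by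
  have hind := (integrableOn_norm_rpow_neg_ball (μ := μ) hs hsd 1).integrable_indicator
    measurableSet_ball
  rw [← integral_indicator measurableSet_ball, ← integral_add hind hg]
  exact integral_mono (integrable_norm_rpow_neg_mul hs hsd hg hg₀ hg₁) (hind.add hg)
    fun y => norm_rpow_neg_mul_le_indicator_add hs (hg₀ y) (hg₁ y) y

end NormRpowNeg

section Gaussian

variable {V : Type*} [NormedAddCommGroup V] [InnerProductSpace ℝ V] [FiniteDimensional ℝ V]
  [MeasurableSpace V] [BorelSpace V] {s a : ℝ}

lemma integral_exp_neg_sq_norm_div (ha : 0 < a) :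
    ∫ v : V, Real.exp (-‖v‖ ^ 2 / a) = (Real.pi * a) ^ (Module.finrank ℝ V / 2 : ℝ) := by
  have := GaussianFourier.integral_rexp_neg_mul_sq_norm (V := V) (inv_pos.2 ha)
  simpa [neg_div, inv_mul_eq_div, div_inv_eq_mul] using this

lemma integral_exp_neg_sq_norm_div_pos (ha : 0 < a) :
    0 < ∫ v : V, Real.exp (-‖v‖ ^ 2 / a) := by
  rw [integral_exp_neg_sq_norm_div ha]
  positivity

lemma integrable_exp_neg_sq_norm_div (ha : 0 < a) :
    Integrable (fun v : V => Real.exp (-‖v‖ ^ 2 / a)) :=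
  Integrable.of_integral_ne_zero (integral_exp_neg_sq_norm_div_pos ha).ne'

lemma integrable_norm_rpow_neg_mul_exp (hs : 0 ≤ s) (hsd : s < Module.finrank ℝ V)
    (ha : 0 < a) (x : V) :
    Integrable (fun y : V => ‖y‖ ^ (-s) * Real.exp (-‖x - y‖ ^ 2 / a)) :=
  integrable_norm_rpow_neg_mul hs hsd ((integrable_exp_neg_sq_norm_div ha).comp_sub_left x)
    (fun _ => (Real.exp_pos _).le)
    (fun _ => Real.exp_neg_sq_div_le_one ha.le _)

lemma integral_norm_rpow_neg_mul_exp_le (hs : 0 ≤ s) (hsd : s < Module.finrank ℝ V)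
    (ha : 0 < a) (x : V) :
    ∫ y : V, ‖y‖ ^ (-s) * Real.exp (-‖x - y‖ ^ 2 / a) ≤
      (∫ y in ball (0 : V) 1, ‖y‖ ^ (-s)) + ∫ z : V, Real.exp (-‖z‖ ^ 2 / a) := by
  rw [← integral_sub_left_eq_self (fun z : V => Real.exp (-‖z‖ ^ 2 / a)) volume x]
  exact integral_norm_rpow_neg_mul_le hs hsd
    ((integrable_exp_neg_sq_norm_div ha).comp_sub_left x) (fun _ => (Real.exp_pos _).le)
    (fun _ => Real.exp_neg_sq_div_le_one ha.le _)

lemma exists_integral_norm_rpow_neg_mul_exp_le (hs : 0 ≤ s)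
    (hsd : s < Module.finrank ℝ V) :
    ∃ A, ∀ x : V, x ≠ 0 →
      ∫ y : V, ‖y‖ ^ (-s) * Real.exp (-‖x - y‖ ^ 2 / 2) ≤ A * ‖x‖ ^ (-s) := by
  set K := (∫ y in ball (0 : V) 1, ‖y‖ ^ (-s)) + ∫ z : V, Real.exp (-‖z‖ ^ 2 / 4)
  have hK : 0 ≤ K := (integral_norm_rpow_neg_mul_exp_le hs hsd four_pos 0).trans'
    (integral_nonneg fun _ => by positivity)
  refine ⟨(s * 16 / 2) ^ (s / 2) * K + 2 ^ s * ∫ z : V, Real.exp (-‖z‖ ^ 2 / 2),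
    fun x hx => ?_⟩
  have hx₀ : 0 < ‖x‖ := norm_pos_iff.2 hx
  calc ∫ y : V, ‖y‖ ^ (-s) * Real.exp (-‖x - y‖ ^ 2 / 2)
      ≤ ∫ y : V, Real.exp (-‖x‖ ^ 2 / 16) * (‖y‖ ^ (-s) * Real.exp (-‖x - y‖ ^ 2 / 4)) +
          (‖x‖ / 2) ^ (-s) * Real.exp (-‖x - y‖ ^ 2 / 2) :=
        integral_mono (integrable_norm_rpow_neg_mul_exp hs hsd two_pos x)
          (((integrable_norm_rpow_neg_mul_exp hs hsd four_pos x).const_mul _).add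
            (((integrable_exp_neg_sq_norm_div two_pos).comp_sub_left x).const_mul _))
          (norm_rpow_neg_mul_exp_le hs hx)
    _ = Real.exp (-‖x‖ ^ 2 / 16) * (∫ y : V, ‖y‖ ^ (-s) * Real.exp (-‖x - y‖ ^ 2 / 4)) +
          (‖x‖ / 2) ^ (-s) * ∫ z : V, Real.exp (-‖z‖ ^ 2 / 2) := by
        rw [integral_add (((integrable_norm_rpow_neg_mul_exp hs hsd four_pos x).const_mul _))
            (((integrable_exp_neg_sq_norm_div two_pos).comp_sub_left x).const_mul _),
          integral_const_mul, integral_const_mul,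
          integral_sub_left_eq_self (fun z : V => Real.exp (-‖z‖ ^ 2 / 2)) volume x]
    _ ≤ (s * 16 / 2) ^ (s / 2) * ‖x‖ ^ (-s) * K +
          (‖x‖ / 2) ^ (-s) * ∫ z : V, Real.exp (-‖z‖ ^ 2 / 2) := by
        gcongr
        · exact Real.exp_neg_sq_div_le_mul_rpow_neg (by norm_num) hs hx₀
        · exact integral_norm_rpow_neg_mul_exp_le hs hsd four_pos x
    _ = _ := by rw [Real.div_two_rpow_neg hx₀.le]; ring

lemma le_integral_norm_rpow_neg_mul_exp (hs : 0 ≤ s) (hsd : s < Module.finrank ℝ V) (x : V) :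
    Real.exp (-1 / 2) * volume.real (ball (0 : V) 1) * (1 + ‖x‖) ^ (-s) ≤
      ∫ y : V, ‖y‖ ^ (-s) * Real.exp (-‖x - y‖ ^ 2 / 2) := by
  have : Nontrivial V :=
    Module.nontrivial_of_finrank_pos (R := ℝ) (by exact_mod_cast hs.trans_lt hsd)
  have hnz : ∀ᵐ y : V, y ≠ 0 := measure_eq_zero_iff_ae_notMem.1 (measure_singleton 0)
  rw [mul_right_comm, mul_comm, ← smul_eq_mul, ← Measure.addHaar_real_ball_center volume x,
    ← integral_indicator_const _ measurableSet_ball]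
  refine integral_mono_ae ((integrableOn_const measure_ball_lt_top.ne).integrable_indicator
    measurableSet_ball) (integrable_norm_rpow_neg_mul_exp hs hsd two_pos x) ?_
  filter_upwards [hnz] with y hy
  by_cases hyx : y ∈ ball x 1
  · have hxy : ‖x - y‖ < 1 := by rwa [mem_ball, dist_eq_norm'] at hyx
    have hyx' : ‖y‖ ≤ 1 + ‖x‖ := by linarith [norm_le_norm_add_norm_sub' y x, norm_sub_rev x y]
    rw [Set.indicator_of_mem hyx, mul_comm (Real.exp _)]
    refine mul_le_mul (Real.rpow_le_rpow_of_nonpos (norm_pos_iff.2 hy) hyx' (neg_nonpos.2 hs))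
      (Real.exp_le_exp.2 ?_) (Real.exp_pos _).le (Real.rpow_nonneg (norm_nonneg y) _)
    nlinarith [norm_nonneg (x - y)]
  · rw [Set.indicator_of_notMem hyx]
    positivity

end Gaussian

section Kernels

variable {n : ℕ} {s : ℝ}

lemma phiOne_le_two_rpow_mul (hs : 0 ≤ s) (x : EuclideanSpace ℝ (Fin n)) :
    phiOne n s x ≤ 2 ^ s * (1 + ‖x‖) ^ (-s) := by
  rw [← Real.div_two_rpow_neg (by positivity), phiOne]
  rcases le_or_gt ‖x‖ 1 with hx | hx
  · refine le_trans ?_ (Real.one_le_rpow_of_pos_of_le_one_of_nonpos (by positivity)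
      (by linarith) (neg_nonpos.2 hs))
    split_ifs
    exacts [le_rfl, min_le_left _ _]
  · have hx₀ : x ≠ 0 := norm_pos_iff.1 (one_pos.trans hx)
    rw [if_neg hx₀]
    exact (min_le_right _ _).trans
      (Real.rpow_le_rpow_of_nonpos (by positivity) (by linarith) (neg_nonpos.2 hs))

lemma le_mul_phiOne {a C : ℝ} (hC : 0 ≤ C) {x : EuclideanSpace ℝ (Fin n)} (h₁ : a ≤ C)
    (h₂ : x ≠ 0 → a ≤ C * ‖x‖ ^ (-s)) : a ≤ C * phiOne n s x := by
  rw [phiOne]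
  split_ifs with hx
  · rwa [mul_one]
  · rw [mul_min_of_nonneg _ _ hC, mul_one]
    exact le_min h₁ (h₂ hx)

lemma psiOne_le_mul_phiOne (hs : 0 ≤ s) (hsn : s < n) :
    ∃ C > 0, ∀ x, psiOne n s x ≤ C * phiOne n s x := by
  have hsd : s < Module.finrank ℝ (EuclideanSpace ℝ (Fin n)) := by
    rwa [finrank_euclideanSpace_fin]
  obtain ⟨A, hA⟩ := exists_integral_norm_rpow_neg_mul_exp_le hs hsd
  set B := (∫ y in ball (0 : EuclideanSpace ℝ (Fin n)) 1, ‖y‖ ^ (-s)) +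
    ∫ z : EuclideanSpace ℝ (Fin n), Real.exp (-‖z‖ ^ 2 / 2)
  have hB : 0 < B := add_pos_of_nonneg_of_pos (setIntegral_nonneg measurableSet_ball
    fun y _ => Real.rpow_nonneg (norm_nonneg y) _) (integral_exp_neg_sq_norm_div_pos two_pos)
  refine ⟨max B A, lt_max_of_lt_left hB, fun x => le_mul_phiOne (lt_max_of_lt_left hB).le
    ((integral_norm_rpow_neg_mul_exp_le hs hsd two_pos x).trans (le_max_left _ _))
    fun hx => (hA x hx).trans ?_⟩
  exact mul_le_mul_of_nonneg_right (le_max_right _ _) (Real.rpow_nonneg (norm_nonneg x) _)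

lemma phiOne_le_mul_psiOne (hs : 0 ≤ s) (hsn : s < n) :
    ∃ C > 0, ∀ x, phiOne n s x ≤ C * psiOne n s x := by
  have hsd : s < Module.finrank ℝ (EuclideanSpace ℝ (Fin n)) := by
    rwa [finrank_euclideanSpace_fin]
  set c := Real.exp (-1 / 2) * volume.real (ball (0 : EuclideanSpace ℝ (Fin n)) 1)
  have hc : 0 < c := mul_pos (Real.exp_pos _)
    (ENNReal.toReal_pos (measure_ball_pos volume 0 one_pos).ne' measure_ball_lt_top.ne)
  refine ⟨2 ^ s / c, by positivity, fun x => ?_⟩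
  calc phiOne n s x ≤ 2 ^ s * (1 + ‖x‖) ^ (-s) := phiOne_le_two_rpow_mul hs x
    _ = 2 ^ s / c * (c * (1 + ‖x‖) ^ (-s)) := by field_simp
    _ ≤ 2 ^ s / c * psiOne n s x := by
        gcongr
        exact le_integral_norm_rpow_neg_mul_exp hs hsd x

end Kernels

theorem stmt_13_general (n : ℕ) (s : ℝ) (hs : 0 < s) (hsn : s < n) :
    ∃ c₁ c₂ : ℝ, 0 < c₁ ∧ 0 < c₂ ∧
      ∀ x : EuclideanSpace ℝ (Fin n),
        c₁ * psiOne n s x ≤ phiOne n s x ∧ phiOne n s x ≤ c₂ * psiOne n s x := by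
  obtain ⟨C₁, hC₁, hψ⟩ := psiOne_le_mul_phiOne hs.le hsn
  obtain ⟨C₂, hC₂, hφ⟩ := phiOne_le_mul_psiOne hs.le hsn
  exact ⟨C₁⁻¹, C₂, inv_pos.2 hC₁, hC₂, fun x =>
    ⟨(inv_mul_le_iff₀ hC₁).2 (hψ x), hφ x⟩⟩

theorem stmt_13 (n : ℕ) (hn : 1 ≤ n) (s : ℝ) (hs : 0 < s) (hsn : s < n) :
    ∃ c₁ c₂ : ℝ, 0 < c₁ ∧ 0 < c₂ ∧
      ∀ x : EuclideanSpace ℝ (Fin n),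
        c₁ * psiOne n s x ≤ phiOne n s x ∧ phiOne n s x ≤ c₂ * psiOne n s x :=
  stmt_13_general n s hs hsn
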